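/- arXiv:1801.02973 — 6 statements merged into one kernel-verified Lean document; each statement's English description precedes it below -/
import Mathlib

section
/- Let Ω ⊆ ℂ be open, I ⊆ ℝ an open interval, β ∈ ℝ, V : ℂ → ℂ entire, and T : Ω → ℂ holomorphic (independent of time). Let U : I × Ω → ℂ be continuously differentiable, holomorphic in the second variable, satisfying ∂_t U(t,z) = (β/2)U·∂_z U + V′(z)·∂_z U + V″(z)·U + T′(z) on I × Ω, and let z : I → Ω be differentiable with z′(t) = −(β/2)U(t,z(t)) − V′(z(t)). Then z is twice differentiable with z″(t) = V″(z(t))·V′(z(t)) − (β/2)T′(z(t)), and consequently the function t ↦ z′(t)² − V′(z(t))² + β·T(z(t)) is constant on I. -/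
/-!
Along a characteristic, the chain rule gives `d/dt U(t, z t) = ∂ₜU + ∂_zU · ż`, with `∂_zU · ż` the
complex derivative because `U t` is holomorphic. Substituting the Burgers equation for `∂ₜU` and
`ż = -(β/2)U - V'` makes every term containing `∂_zU` cancel, leaving the autonomous equation
`z̈ = V''(z)V'(z) - (β/2)T'(z)`. This is Newton's equation for the potential `(βT - V'²)/2`, so the
energy `ż² - V'(z)² + βT(z)` has derivative zero and is constant on the interval `I`.
-/

theorem hasDerivAt_comp_curve_of_holomorphic {U : ℝ → ℂ → ℂ} {z : ℝ → ℂ} {t : ℝ} {z' : ℂ}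
    (hU : DifferentiableAt ℝ (fun p : ℝ × ℂ => U p.1 p.2) (t, z t))
    (hhol : DifferentiableAt ℂ (U t) (z t)) (hz : HasDerivAt z z' t) :
    HasDerivAt (fun τ => U τ (z τ))
      (deriv (fun τ => U τ (z t)) t + deriv (U t) (z t) * z') t := by
  set L := fderiv ℝ (fun p : ℝ × ℂ => U p.1 p.2) (t, z t)
  have hL : HasFDerivAt (fun p : ℝ × ℂ => U p.1 p.2) L (t, z t) := hU.hasFDerivAt
  have htime : HasDerivAt (fun τ => U τ (z t)) (L (1, 0)) t :=
    hL.comp_hasDerivAt (f := fun τ => (τ, z t)) t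
      ((hasDerivAt_id t).prodMk (hasDerivAt_const t (z t)))
  have hspace : L (0, z') = deriv (U t) (z t) * z' := by
    have hreal : HasFDerivAt (U t) (L.comp (ContinuousLinearMap.inr ℝ ℝ ℂ)) (z t) :=
      hL.comp (z t) ((hasFDerivAt_const t (z t)).prodMk (hasFDerivAt_id (z t)))
    have hcomplex := hhol.hasDerivAt.hasFDerivAt.restrictScalars ℝ
    simpa [mul_comm] using congrArg (· z') (hreal.unique hcomplex)
  have hsplit : L (1, z') = L (1, 0) + L (0, z') := by
    rw [← map_add, Prod.mk_add_mk, add_zero, zero_add]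
  rw [htime.deriv, ← hspace, ← hsplit]
  exact hL.comp_hasDerivAt (f := fun τ => (τ, z τ)) t ((hasDerivAt_id t).prodMk hz)

theorem hasDerivAt_characteristic_velocity {U : ℝ → ℂ → ℂ} {P T : ℂ → ℂ} {z : ℝ → ℂ}
    {β : ℂ} {t : ℝ}
    (hU : DifferentiableAt ℝ (fun p : ℝ × ℂ => U p.1 p.2) (t, z t))
    (hhol : DifferentiableAt ℂ (U t) (z t)) (hP : DifferentiableAt ℂ P (z t))
    (hPDE : deriv (fun τ => U τ (z t)) t =
      β / 2 * U t (z t) * deriv (U t) (z t) + P (z t) * deriv (U t) (z t)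
        + deriv P (z t) * U t (z t) + deriv T (z t))
    (hz : HasDerivAt z (-(β / 2) * U t (z t) - P (z t)) t) :
    HasDerivAt (fun τ => -(β / 2) * U τ (z τ) - P (z τ))
      (deriv P (z t) * P (z t) - β / 2 * deriv T (z t)) t := by
  have hUz := hasDerivAt_comp_curve_of_holomorphic hU hhol hz
  have hPz := hP.hasDerivAt.comp t hz
  refine ((hUz.const_mul (-(β / 2))).sub hPz).congr_deriv ?_
  rw [hPDE]
  ring

theorem hasDerivAt_energy_eq_zero {P T : ℂ → ℂ} {z w : ℝ → ℂ} {β : ℂ} {t : ℝ}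
    (hP : DifferentiableAt ℂ P (z t)) (hT : DifferentiableAt ℂ T (z t))
    (hz : HasDerivAt z (w t) t)
    (hw : HasDerivAt w (deriv P (z t) * P (z t) - β / 2 * deriv T (z t)) t) :
    HasDerivAt (fun τ => w τ ^ 2 - P (z τ) ^ 2 + β * T (z τ)) 0 t := by
  have hPz := hP.hasDerivAt.comp t hz
  have hTz := hT.hasDerivAt.comp t hz
  refine (((hw.pow 2).sub (hPz.pow 2)).add (hTz.const_mul β)).congr_deriv ?_
  simp only [Function.comp_apply]
  ring

/-- when `T` is time-independent, the characteristics
`z' = -(β/2) U(t,z) - V'(z)` of the generalized complex Burgers equation satisfy the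
autonomous second-order ODE `z'' = V''(z) V'(z) - (β/2) T'(z)`, and consequently
`t ↦ z'(t)² - V'(z t)² + β T(z t)` is constant. -/
theorem stmt_4 (Ω : Set ℂ) (hΩ : IsOpen Ω) (I : Set ℝ) (hIopen : IsOpen I)
    (hIconn : I.OrdConnected) (β : ℝ) (V : ℂ → ℂ) (hV : Differentiable ℂ V)
    (T : ℂ → ℂ) (hT : ∀ z ∈ Ω, DifferentiableAt ℂ T z)
    (U : ℝ → ℂ → ℂ)
    (hUC1 : ContDiffOn ℝ 1 (fun p : ℝ × ℂ => U p.1 p.2) (I ×ˢ Ω))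
    (hUhol : ∀ t ∈ I, ∀ z ∈ Ω, DifferentiableAt ℂ (U t) z)
    (hPDE : ∀ t ∈ I, ∀ z ∈ Ω,
      deriv (fun τ : ℝ => U τ z) t =
        ((β : ℂ) / 2) * U t z * deriv (U t) z + deriv V z * deriv (U t) z
          + deriv (deriv V) z * U t z + deriv T z)
    (z : ℝ → ℂ) (hzΩ : ∀ t ∈ I, z t ∈ Ω)
    (hzder : ∀ t ∈ I, HasDerivAt z (-((β : ℂ) / 2) * U t (z t) - deriv V (z t)) t) :
    (∀ t ∈ I,
      HasDerivAt (fun τ : ℝ => -((β : ℂ) / 2) * U τ (z τ) - deriv V (z τ))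
        (deriv (deriv V) (z t) * deriv V (z t) - ((β : ℂ) / 2) * deriv T (z t)) t) ∧
    (∀ t₁ ∈ I, ∀ t₂ ∈ I,
      (-((β : ℂ) / 2) * U t₁ (z t₁) - deriv V (z t₁)) ^ 2 - (deriv V (z t₁)) ^ 2
          + (β : ℂ) * T (z t₁)
        = (-((β : ℂ) / 2) * U t₂ (z t₂) - deriv V (z t₂)) ^ 2 - (deriv V (z t₂)) ^ 2
          + (β : ℂ) * T (z t₂)) := by
  have hU : ∀ t ∈ I, DifferentiableAt ℝ (fun p : ℝ × ℂ => U p.1 p.2) (t, z t) := fun t ht =>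
    (hUC1.contDiffAt ((hIopen.prod hΩ).mem_nhds ⟨ht, hzΩ t ht⟩)).differentiableAt one_ne_zero
  have hacc : ∀ t ∈ I,
      HasDerivAt (fun τ : ℝ => -((β : ℂ) / 2) * U τ (z τ) - deriv V (z τ))
        (deriv (deriv V) (z t) * deriv V (z t) - ((β : ℂ) / 2) * deriv T (z t)) t :=
    fun t ht => hasDerivAt_characteristic_velocity (hU t ht) (hUhol t ht _ (hzΩ t ht))
      (hV.deriv _) (hPDE t ht _ (hzΩ t ht)) (hzder t ht)
  have henergy : ∀ t ∈ I, HasDerivAt (fun τ : ℝ =>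
      (-((β : ℂ) / 2) * U τ (z τ) - deriv V (z τ)) ^ 2 - (deriv V (z τ)) ^ 2
        + (β : ℂ) * T (z τ)) 0 t :=
    fun t ht => hasDerivAt_energy_eq_zero (hV.deriv _) (hT _ (hzΩ t ht)) (hzder t ht) (hacc t ht)
  refine ⟨hacc, fun t₁ ht₁ t₂ ht₂ => ?_⟩
  exact hIopen.is_const_of_deriv_eq_zero hIconn.isPreconnected
    (fun t ht => (henergy t ht).differentiableAt.differentiableWithinAt)
    (fun t ht => (henergy t ht).deriv) ht₁ ht₂
end

section
/- Let Ω ⊆ ℂ be open, I ⊆ ℝ an interval containing 0, and β ∈ ℝ. Let U : I × Ω → ℂ be continuously differentiable and holomorphic in the second variable, satisfying for all (t,z) ∈ I × Ω the harmonic-potential complex Burgers equation ∂_t U(t,z) = (β/2)U(t,z)·∂_z U(t,z) + z·∂_z U(t,z) + U(t,z). Let z : I → Ω be differentiable with z′(t) = −(β/2)U(t,z(t)) − z(t). Then for all t ∈ I: U(t,z(t)) = e^t·U(0,z(0)) and z(t) = z(0)·e^{−t} − (β/2)·U(0,z(0))·sinh t. -/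
/-!
Along the characteristic the chain rule gives `d/dt U(t, z t) = ∂ₜU + ∂_z U · z'`, and by the PDE the
transport terms `(β/2) U ∂_z U + z ∂_z U` cancel, leaving `d/dt U(t, z t) = U(t, z t)`. Hence
`U(t, z t) = e^t U(0, z 0)`, and `z` then solves the linear equation `z' = -z - (β/2) U(0, z 0) e^t`,
whose solution is explicit. Both linear ODEs are solved by an integrating factor; derivatives are only
taken on the interior of `I` (where `I ×ˢ Ω` is a neighbourhood), continuity reaches the endpoints.
-/

open Set

theorem Set.OrdConnected.eq_of_hasDerivAt_eq_zero {E : Type*} [NormedAddCommGroup E]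
    [NormedSpace ℝ E] {I : Set ℝ} {f : ℝ → E} (hI : I.OrdConnected) (hf : ContinuousOn f I)
    (hf' : ∀ t ∈ interior I, HasDerivAt f 0 t) {x y : ℝ} (hx : x ∈ I) (hy : y ∈ I) :
    f x = f y := by
  wlog hxy : x < y generalizing x y
  · rcases (not_lt.mp hxy).eq_or_lt with rfl | hyx
    · rfl
    · exact (this hy hx hyx).symm
  have hIcc : Icc x y ⊆ I := hI.out hx hy
  have hIoo : Ioo x y ⊆ interior I := by
    simpa only [interior_Icc] using interior_mono hIcc
  have hconst : EqOn f (fun _ => f y) (Ioo x y) := fun u hu =>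
    (constant_of_has_deriv_right_zero (hf.mono ((Icc_subset_Icc_left hu.1.le).trans hIcc))
      (fun v hv => (hf' v (hIoo ⟨hu.1.trans_le hv.1, hv.2⟩)).hasDerivWithinAt)
      y ⟨hu.2.le, le_rfl⟩).symm
  exact hconst.of_subset_closure (hf.mono hIcc) continuousOn_const Ioo_subset_Icc_self
    (closure_Ioo hxy.ne).ge ⟨le_rfl, hxy.le⟩

theorem Set.OrdConnected.eq_exp_mul_smul_of_hasDerivAt {E : Type*} [NormedAddCommGroup E]
    [NormedSpace ℝ E] {I : Set ℝ} {f : ℝ → E} {c : ℝ} (hI : I.OrdConnected) (h0 : 0 ∈ I)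
    (hf : ContinuousOn f I) (hf' : ∀ t ∈ interior I, HasDerivAt f (c • f t) t) {t : ℝ}
    (ht : t ∈ I) : f t = Real.exp (c * t) • f 0 := by
  have hexp : ∀ s : ℝ, HasDerivAt (fun s => Real.exp (-(c * s))) (-c * Real.exp (-(c * s))) s :=
    fun s => by simpa [mul_comm] using ((hasDerivAt_id s).const_mul c).neg.exp
  have hzero : ∀ s ∈ interior I, HasDerivAt (fun s => Real.exp (-(c * s)) • f s) 0 s := by
    intro s hs
    refine ((hexp s).smul (hf' s hs)).congr_deriv ?_
    module
  have hcont : ContinuousOn (fun s => Real.exp (-(c * s)) • f s) I :=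
    (Continuous.continuousOn (by fun_prop)).smul hf
  have hconst := hI.eq_of_hasDerivAt_eq_zero hcont hzero ht h0
  simp only [mul_zero, neg_zero, Real.exp_zero, one_smul] at hconst
  rw [← hconst, smul_smul, ← Real.exp_add, add_neg_cancel, Real.exp_zero, one_smul]

theorem Set.OrdConnected.eq_exp_neg_smul_add_sinh_smul_of_hasDerivAt {E : Type*}
    [NormedAddCommGroup E] [NormedSpace ℝ E] {I : Set ℝ} {f : ℝ → E} {a : E}
    (hI : I.OrdConnected) (h0 : 0 ∈ I) (hf : ContinuousOn f I)
    (hf' : ∀ t ∈ interior I, HasDerivAt f (Real.exp t • a - f t) t) {t : ℝ} (ht : t ∈ I) :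
    f t = Real.exp (-t) • f 0 + Real.sinh t • a := by
  have hhom : ∀ s ∈ interior I,
      HasDerivAt (fun s => f s - Real.sinh s • a) ((-1 : ℝ) • (f s - Real.sinh s • a)) s := by
    intro s hs
    refine ((hf' s hs).sub ((Real.hasDerivAt_sinh s).smul_const a)).congr_deriv ?_
    rw [← Real.cosh_add_sinh s]
    module
  have hcont : ContinuousOn (fun s => f s - Real.sinh s • a) I :=
    hf.sub (Continuous.continuousOn (by fun_prop))
  have hsol := hI.eq_exp_mul_smul_of_hasDerivAt h0 hcont hhom ht
  simp only [Real.sinh_zero, zero_smul, sub_zero, neg_one_mul] at hsol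
  rw [← hsol]
  abel

theorem hasDerivAt_comp_curve {F : Type*} [NormedAddCommGroup F] [NormedSpace ℂ F]
    {U : ℝ → ℂ → F} {z : ℝ → ℂ} {s : ℝ} {z' : ℂ}
    (hU : DifferentiableAt ℝ (fun p : ℝ × ℂ => U p.1 p.2) (s, z s))
    (hUs : DifferentiableAt ℂ (U s) (z s)) (hz : HasDerivAt z z' s) :
    HasDerivAt (fun τ => U τ (z τ)) (deriv (fun τ => U τ (z s)) s + z' • deriv (U s) (z s)) s := by
  set L := fderiv ℝ (fun p : ℝ × ℂ => U p.1 p.2) (s, z s)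
  have hL : HasFDerivAt (fun p : ℝ × ℂ => U p.1 p.2) L (s, z s) := hU.hasFDerivAt
  have htime : HasDerivAt (fun τ => U τ (z s)) (L (1, 0)) s := by
    exact hL.comp_hasDerivAt s ((hasDerivAt_id s).prodMk (hasDerivAt_const s (z s)))
  have hspace : L.comp ((0 : ℂ →L[ℝ] ℝ).prod (ContinuousLinearMap.id ℝ ℂ)) =
      ((1 : ℂ →L[ℂ] ℂ).smulRight (deriv (U s) (z s))).restrictScalars ℝ :=
    (hL.comp (z s) ((hasFDerivAt_const s (z s)).prodMk (hasFDerivAt_id (z s)))).unique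
      (hUs.hasDerivAt.hasFDerivAt.restrictScalars ℝ)
  have hspace' : L (0, z') = z' • deriv (U s) (z s) := by simpa using congr($hspace z')
  have hcurve : HasDerivAt (fun τ => U τ (z τ)) (L (1, z')) s := by
    exact hL.comp_hasDerivAt s ((hasDerivAt_id s).prodMk hz)
  rwa [htime.deriv, ← hspace', ← map_add, Prod.mk_add_mk, add_zero, zero_add]

/-- for the harmonic-potential complex Burgers equation
`∂ₜU = (β/2) U ∂_z U + z ∂_z U + U`, along a characteristic
`z' = -(β/2) U(t, z) - z`, the solution grows like `e^t`:
`U (t, z t) = e^t U (0, z 0)`, and the characteristic is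
`z t = z 0 e^{-t} - (β/2) U (0, z 0) sinh t`. -/
theorem stmt_6 (Ω : Set ℂ) (hΩ : IsOpen Ω) (I : Set ℝ) (hIconn : I.OrdConnected)
    (h0 : (0 : ℝ) ∈ I) (β : ℝ) (U : ℝ → ℂ → ℂ)
    (hUC1 : ContDiffOn ℝ 1 (fun p : ℝ × ℂ => U p.1 p.2) (I ×ˢ Ω))
    (hUhol : ∀ t ∈ I, ∀ w ∈ Ω, DifferentiableAt ℂ (U t) w)
    (hPDE : ∀ t ∈ I, ∀ w ∈ Ω,
      deriv (fun τ : ℝ => U τ w) t =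
        ((β : ℂ) / 2) * U t w * deriv (U t) w + w * deriv (U t) w + U t w)
    (z : ℝ → ℂ) (hzΩ : ∀ t ∈ I, z t ∈ Ω)
    (hzder : ∀ t ∈ I, HasDerivAt z (-((β : ℂ) / 2) * U t (z t) - z t) t) :
    ∀ t ∈ I,
      U t (z t) = Complex.exp (t : ℂ) * U 0 (z 0) ∧
      z t = z 0 * Complex.exp (-(t : ℂ))
        - ((β : ℂ) / 2) * U 0 (z 0) * Complex.sinh (t : ℂ) := by
  intro t ht
  have hUdiff : ∀ s ∈ interior I, DifferentiableAt ℝ (fun p : ℝ × ℂ => U p.1 p.2) (s, z s) :=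
    fun s hs => (hUC1.contDiffAt (Filter.mem_of_superset
      ((isOpen_interior.prod hΩ).mem_nhds ⟨hs, hzΩ s (interior_subset hs)⟩)
      (prod_mono interior_subset subset_rfl))).differentiableAt one_ne_zero
  have hzcont : ContinuousOn z I := fun s hs => (hzder s hs).continuousAt.continuousWithinAt
  have hUzcont : ContinuousOn (fun s => U s (z s)) I :=
    hUC1.continuousOn.comp (continuousOn_id.prodMk hzcont) fun s hs => ⟨hs, hzΩ s hs⟩
  have hUzder : ∀ s ∈ interior I, HasDerivAt (fun s => U s (z s)) ((1 : ℝ) • U s (z s)) s := by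
    intro s hs
    have hsI := interior_subset hs
    refine (hasDerivAt_comp_curve (hUdiff s hs) (hUhol s hsI _ (hzΩ s hsI))
      (hzder s hsI)).congr_deriv ?_
    rw [hPDE s hsI _ (hzΩ s hsI), one_smul, smul_eq_mul]
    ring
  have hgrowth : ∀ s ∈ I, U s (z s) = Complex.exp s * U 0 (z 0) := fun s hs => by
    rw [hIconn.eq_exp_mul_smul_of_hasDerivAt h0 hUzcont hUzder hs, one_mul, Complex.real_smul,
      Complex.ofReal_exp]
  refine ⟨hgrowth t ht, ?_⟩
  have hzlin : ∀ s ∈ interior I,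
      HasDerivAt z (Real.exp s • (-((β : ℂ) / 2) * U 0 (z 0)) - z s) s := by
    intro s hs
    convert hzder s (interior_subset hs) using 1
    rw [hgrowth s (interior_subset hs), Complex.real_smul, Complex.ofReal_exp]
    ring
  rw [hIconn.eq_exp_neg_smul_add_sinh_smul_of_hasDerivAt h0 hzcont hzlin ht, Complex.real_smul,
    Complex.real_smul, Complex.ofReal_exp, Complex.ofReal_sinh, Complex.ofReal_neg]
  ring
end

section
/- Let θ ∈ ℝ with sin θ ≠ 0 and let (δθ, δt) ∈ ℝ² with (δθ, δt) ≠ (0,0). Then lim_{ε→0⁺} ε²·(−1/(8π²))·( Re[1/sin²((ε δθ + iε δt)/2)] + Re[1/sin²((2θ + ε δθ + iε δt)/2)] ) = −(1/(2π²))·Re[1/(δθ + i δt)²], and moreover Re[1/(δθ + i δt)²] = Re[1/(δθ − i δt)²]. -/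
open Filter Topology

/-- short-distance scaled asymptotics of the stationary Hermite covariance
kernel in angular coordinates: as `ε → 0⁺`,
`ε² (-(1/8π²)) (Re[1/sin²((εδθ+iεδt)/2)] + Re[1/sin²((2θ+εδθ+iεδt)/2)])`
converges to `-(1/2π²) Re[1/(δθ+iδt)²]`, and `Re[1/(δθ+iδt)²] = Re[1/(δθ-iδt)²]`. -/
theorem stmt_11 (θ δθ δt : ℝ) (hθ : Real.sin θ ≠ 0) (hδ : (δθ, δt) ≠ (0, 0)) :
    Tendsto (fun ε : ℝ =>
        ε ^ 2 * (-(1 / (8 * Real.pi ^ 2))) *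
          ((1 / Complex.sin ((((ε * δθ : ℝ) : ℂ) + Complex.I * ((ε * δt : ℝ) : ℂ)) / 2) ^ 2).re
            + (1 / Complex.sin ((((2 * θ + ε * δθ : ℝ) : ℂ)
                + Complex.I * ((ε * δt : ℝ) : ℂ)) / 2) ^ 2).re))
      (nhdsWithin 0 (Set.Ioi 0))
      (nhds (-(1 / (2 * Real.pi ^ 2)) * (1 / (((δθ : ℂ) + Complex.I * (δt : ℂ)) ^ 2)).re)) ∧
    (1 / (((δθ : ℂ) + Complex.I * (δt : ℂ)) ^ 2)).re
      = (1 / (((δθ : ℂ) - Complex.I * (δt : ℂ)) ^ 2)).re := by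
  set w : ℂ := (δθ : ℂ) + Complex.I * (δt : ℂ) with hw
  have hw0 : w ≠ 0 := by
    intro h
    apply hδ
    have h1 := congrArg Complex.re h
    have h2 := congrArg Complex.im h
    simp [hw, Complex.add_re, Complex.add_im, Complex.mul_re, Complex.mul_im] at h1 h2
    simp [Prod.ext_iff, h1, h2]
  constructor
  · -- the tendsto part
    have hsin : Tendsto (fun z : ℂ => Complex.sin z / z) (𝓝[≠] (0:ℂ)) (𝓝 1) := by
      have h := hasDerivAt_iff_tendsto_slope.mp (Complex.hasDerivAt_sin 0)
      simp only [Complex.cos_zero] at h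
      refine h.congr fun z => ?_
      simp [slope_def_field]
    have hmap : Tendsto (fun ε : ℝ => (ε:ℂ) * w / 2) (𝓝[>] (0:ℝ)) (𝓝[≠] (0:ℂ)) := by
      refine tendsto_nhdsWithin_of_tendsto_nhds_of_eventually_within _ ?_ ?_
      · have h0 : Tendsto (fun ε : ℝ => (ε:ℂ)) (𝓝[>] (0:ℝ)) (𝓝 (0:ℂ)) :=
          (Complex.continuous_ofReal.tendsto 0).mono_left nhdsWithin_le_nhds
        simpa using (h0.mul_const w).div_const 2
      · filter_upwards [self_mem_nhdsWithin] with ε hε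
        have hε' : (0:ℝ) < ε := hε
        simp only [Set.mem_compl_iff, Set.mem_singleton_iff]
        exact div_ne_zero (mul_ne_zero (by exact_mod_cast hε'.ne') hw0) two_ne_zero
    have hr : Tendsto (fun ε : ℝ => ((ε:ℂ) * w / 2) / Complex.sin ((ε:ℂ) * w / 2))
        (𝓝[>] (0:ℝ)) (𝓝 1) := by
      have h := ((hsin.comp hmap).inv₀ one_ne_zero)
      simp only [inv_one] at h
      refine h.congr fun ε => ?_
      simp [Function.comp, inv_div]
    have hA : Tendsto (fun ε : ℝ => ((ε:ℂ)^2 / Complex.sin ((ε:ℂ) * w / 2)^2))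
        (𝓝[>] (0:ℝ)) (𝓝 (4 / w^2)) := by
      have h := (hr.mul hr).const_mul (4 / w^2)
      simp only [mul_one] at h
      refine h.congr fun ε => ?_
      rw [div_mul_div_comm, mul_div_assoc']
      congr 1
      · field_simp
        ring
      · ring
    have hReA : Tendsto (fun ε : ℝ => ((ε:ℂ)^2 / Complex.sin ((ε:ℂ) * w / 2)^2).re)
        (𝓝[>] (0:ℝ)) (𝓝 ((4 / w^2).re)) :=
      (Complex.continuous_re.tendsto _).comp hA
    have hsθ : Complex.sin ((θ:ℂ) + (0:ℝ) * w / 2) ^ 2 ≠ 0 := by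
      simp only [Complex.ofReal_zero, zero_mul, zero_div, add_zero]
      refine pow_ne_zero 2 ?_
      rw [← Complex.ofReal_sin]
      exact_mod_cast hθ
    have hct : ContinuousAt (fun ε : ℝ => (1 / Complex.sin ((θ:ℂ) + (ε:ℂ) * w / 2) ^ 2).re) 0 := by
      apply Complex.continuous_re.continuousAt.comp
      apply ContinuousAt.div continuousAt_const
      · exact ((Complex.continuous_sin.comp (by continuity)).pow 2).continuousAt
      · exact_mod_cast hsθ
    have hB : Tendsto (fun ε : ℝ => ε^2 * (1 / Complex.sin ((θ:ℂ) + (ε:ℂ) * w / 2) ^ 2).re)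
        (𝓝[>] (0:ℝ)) (𝓝 0) := by
      have h1 : Tendsto (fun ε : ℝ => ε^2) (𝓝[>] (0:ℝ)) (𝓝 (0:ℝ)) := by
        have : Tendsto (fun ε : ℝ => ε^2) (𝓝 (0:ℝ)) (𝓝 ((0:ℝ)^2)) :=
          (continuous_pow 2).tendsto 0
        simpa using this.mono_left nhdsWithin_le_nhds
      have h2 := (hct.tendsto).mono_left (nhdsWithin_le_nhds (s := Set.Ioi (0:ℝ)))
      simpa using h1.mul h2
    have hmain := (hReA.add hB).const_mul (-(1 / (8 * Real.pi ^ 2)))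
    have hlim : -(1 / (8 * Real.pi ^ 2)) * ((4 / w^2).re + 0)
        = -(1 / (2 * Real.pi ^ 2)) * (1 / w ^ 2).re := by
      have : (4 / w^2) = ((4:ℝ):ℂ) * (1 / w^2) := by push_cast; ring
      rw [this, Complex.re_ofReal_mul]
      ring
    rw [← hlim]
    refine hmain.congr fun ε => ?_
    have harg1 : (((ε * δθ : ℝ) : ℂ) + Complex.I * ((ε * δt : ℝ) : ℂ)) / 2 = (ε:ℂ) * w / 2 := by
      rw [hw]; push_cast; ring
    have harg2 : (((2 * θ + ε * δθ : ℝ) : ℂ) + Complex.I * ((ε * δt : ℝ) : ℂ)) / 2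
        = (θ:ℂ) + (ε:ℂ) * w / 2 := by
      rw [hw]; push_cast; ring
    rw [harg1, harg2]
    have hre : ((ε:ℂ)^2 / Complex.sin ((ε:ℂ) * w / 2)^2).re
        = ε^2 * (1 / Complex.sin ((ε:ℂ) * w / 2)^2).re := by
      rw [div_eq_mul_one_div, ← Complex.ofReal_pow, Complex.re_ofReal_mul]
    rw [hre]
    ring
  · -- symmetry of Re under conjugation
    have hconj : ((δθ:ℂ) - Complex.I * (δt:ℂ)) = starRingEnd ℂ w := by
      rw [hw, map_add, map_mul, Complex.conj_I, Complex.conj_ofReal, Complex.conj_ofReal]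
      ring
    rw [hconj]
    have : (1 / (starRingEnd ℂ w) ^ 2) = starRingEnd ℂ (1 / w ^ 2) := by
      rw [map_div₀, map_pow, map_one]
    rw [this, Complex.conj_re]
end

section
/- Let n ≥ 1 and let P be a polynomial with real coefficients of degree 2n − 1 whose leading coefficient is strictly positive. Then there exists a₀ ≥ 0 such that for all a, b ∈ ℝ with |a| ≥ a₀ and 0 < b < 1, one has Im P(a + ib) > 0. -/
/-!
By the mean value theorem applied to `t ↦ Im P(a + it)`, which vanishes at `t = 0`,
`Im P(a + ib) = b · Re P'(a + iξ)` for some `ξ ∈ (0, b)`. So it suffices that `Re Q(a + w) > 0`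
for `|a|` large, uniformly in `w` in a compact set, where `Q = P'` has even degree and positive
leading coefficient. Writing `Q(a + w) = a ^ deg Q · G(1/a, w)` with `G` continuous and
`G(0, w) = lead Q`, this follows from the tube lemma, since `a ^ deg Q > 0`.
-/

open Polynomial Complex Set Topology Finset

namespace Polynomial

/-- `s ^ deg Q * Q (s⁻¹ + w)`, written so that it is visibly continuous at `s = 0`. -/
noncomputable def scaledEval (Q : ℂ[X]) (s : ℝ) (w : ℂ) : ℂ :=
  ∑ k ∈ range (Q.natDegree + 1), Q.coeff k * (s : ℂ) ^ (Q.natDegree - k) * (1 + s * w) ^ k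

theorem continuous_scaledEval (Q : ℂ[X]) :
    Continuous fun z : ℝ × ℂ => Q.scaledEval z.1 z.2 := by
  unfold scaledEval
  fun_prop

theorem scaledEval_zero (Q : ℂ[X]) (w : ℂ) : Q.scaledEval 0 w = Q.leadingCoeff := by
  rw [scaledEval, sum_range_succ, sum_eq_zero fun k hk => ?_]
  · simp only [Nat.sub_self, pow_zero, ofReal_zero, zero_mul, add_zero, one_pow, mul_one,
      zero_add, coeff_natDegree]
  · simp [zero_pow (Nat.sub_ne_zero_of_lt (mem_range.mp hk))]

theorem eval_add_eq_pow_mul_scaledEval (Q : ℂ[X]) {a : ℝ} (ha : a ≠ 0) (w : ℂ) :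
    Q.eval (a + w) = (a : ℂ) ^ Q.natDegree * Q.scaledEval a⁻¹ w := by
  rw [eval_eq_sum_range, scaledEval, mul_sum]
  refine sum_congr rfl fun k hk => ?_
  have hak : (a : ℂ) ^ Q.natDegree = (a : ℂ) ^ (Q.natDegree - k) * (a : ℂ) ^ k := by
    rw [← pow_add, Nat.sub_add_cancel (Nat.lt_succ_iff.mp (mem_range.mp hk))]
  have ha' : (a : ℂ) ≠ 0 := ofReal_ne_zero.mpr ha
  rw [hak, ofReal_inv]
  calc Q.coeff k * (a + w) ^ k
      = ((a : ℂ) * (a : ℂ)⁻¹) ^ (Q.natDegree - k) * Q.coeff k *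
          (a * (1 + (a : ℂ)⁻¹ * w)) ^ k := by
        rw [mul_inv_cancel₀ ha', mul_add, ← mul_assoc, mul_inv_cancel₀ ha', one_pow, one_mul,
          one_mul, mul_one]
    _ = _ := by rw [mul_pow, mul_pow]; ring

theorem exists_forall_abs_ge_re_eval_add_pos (Q : ℂ[X]) (hQ : Even Q.natDegree)
    (hlead : 0 < Q.leadingCoeff.re) {K : Set ℂ} (hK : IsCompact K) :
    ∃ a₀ : ℝ, 0 ≤ a₀ ∧ ∀ a : ℝ, a₀ ≤ |a| → ∀ w ∈ K,
      0 < (Q.eval (a + w)).re := by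
  have hnear : ∀ᶠ s in 𝓝 (0 : ℝ), ∀ w ∈ K, 0 < (Q.scaledEval s w).re := by
    refine hK.eventually_forall_of_forall_eventually fun w _ => ?_
    have hcont : ContinuousAt (fun z : ℝ × ℂ => (Q.scaledEval z.1 z.2).re) (0, w) :=
      (continuous_re.comp Q.continuous_scaledEval).continuousAt
    exact continuousAt_const.eventually_lt hcont (by simpa [scaledEval_zero] using hlead)
  obtain ⟨ε, hε, hball⟩ := Metric.eventually_nhds_iff.mp hnear
  refine ⟨2 / ε, by positivity, fun a ha w hw => ?_⟩
  have ha0 : 0 < |a| := lt_of_lt_of_le (by positivity) ha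
  have hinv : dist a⁻¹ 0 < ε := by
    rw [dist_zero_right, norm_inv, Real.norm_eq_abs]
    calc |a|⁻¹ ≤ (2 / ε)⁻¹ := inv_anti₀ (by positivity) ha
      _ < ε := by rw [inv_div]; linarith
  rw [Q.eval_add_eq_pow_mul_scaledEval (abs_pos.mp ha0), ← ofReal_pow, re_ofReal_mul]
  exact mul_pos (hQ.pow_pos (abs_pos.mp ha0)) (hball hinv w hw)

theorem hasDerivAt_im_eval_add_mul_I (p : ℂ[X]) (a t : ℝ) :
    HasDerivAt (fun s : ℝ => (p.eval (a + s * I)).im) (p.derivative.eval (a + t * I)).re t := by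
  have hline : HasDerivAt (fun s : ℝ => (a : ℂ) + s * I) I t := by
    simpa using ((hasDerivAt_id t).ofReal_comp.mul_const I).const_add (a : ℂ)
  exact (imCLM.hasFDerivAt.comp_hasDerivAt t ((p.hasDerivAt _).comp t hline)).congr_deriv (by simp)

theorem exists_im_eval_eq_mul_re_derivative (P : ℝ[X]) (a : ℝ) {b : ℝ} (hb : 0 < b) :
    ∃ ξ ∈ Ioo 0 b, ((P.map (algebraMap ℝ ℂ)).eval (a + b * I)).im =
      b * ((P.map (algebraMap ℝ ℂ)).derivative.eval (a + ξ * I)).re := by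
  obtain ⟨ξ, hξ, hslope⟩ := exists_hasDerivAt_eq_slope
    (fun s : ℝ => ((P.map (algebraMap ℝ ℂ)).eval (a + s * I)).im) _ hb
    (by fun_prop) (fun t _ => hasDerivAt_im_eval_add_mul_I _ a t)
  have hreal : ((P.map (algebraMap ℝ ℂ)).eval (a : ℂ)).im = 0 := by
    rw [eval_map_algebraMap, show (a : ℂ) = algebraMap ℝ ℂ a from rfl,
      aeval_algebraMap_apply_eq_algebraMap_eval]
    exact ofReal_im _
  refine ⟨ξ, hξ, ?_⟩
  rw [hslope]
  simp only [ofReal_zero, zero_mul, add_zero, hreal, sub_zero]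
  field_simp

end Polynomial

/-- if `P` is a real polynomial of odd degree `2n - 1` (`n ≥ 1`) with
strictly positive leading coefficient, then there exists `a₀ ≥ 0` such that
`Im P(a + ib) > 0` whenever `|a| ≥ a₀` and `0 < b < 1`. -/
theorem stmt_14 (n : ℕ) (hn : 1 ≤ n) (P : Polynomial ℝ)
    (hdeg : P.natDegree = 2 * n - 1) (hlead : 0 < P.leadingCoeff) :
    ∃ a₀ : ℝ, 0 ≤ a₀ ∧ ∀ a b : ℝ, a₀ ≤ |a| → 0 < b → b < 1 →
      0 < ((P.map (algebraMap ℝ ℂ)).eval ((a : ℂ) + (b : ℂ) * Complex.I)).im := by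
  set Q := (P.map (algebraMap ℝ ℂ)).derivative
  have hQdeg : Even Q.natDegree := ⟨n - 1, by simp [Q, hdeg]; omega⟩
  have hQlead : 0 < Q.leadingCoeff.re := by
    simpa [Q, hdeg] using mul_pos hlead (Nat.cast_pos (α := ℝ).mpr (by omega : 0 < 2 * n - 1))
  have hK : IsCompact ((fun t : ℝ => (t : ℂ) * I) '' Icc 0 1) :=
    isCompact_Icc.image (by fun_prop)
  obtain ⟨a₀, ha₀, hpos⟩ := Q.exists_forall_abs_ge_re_eval_add_pos hQdeg hQlead hK
  refine ⟨a₀, ha₀, fun a b ha hb hb1 => ?_⟩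
  obtain ⟨ξ, hξ, heq⟩ := exists_im_eval_eq_mul_re_derivative P a hb
  rw [heq]
  exact mul_pos hb (hpos a ha _ ⟨ξ, ⟨hξ.1.le, by linarith [hξ.2]⟩, rfl⟩)
end

section
/- Let b₀ > 0 and t > 0. Set h := 1 + (b₀²/2)(coth t − 1) (so h > 1) and x* := b₀·h/√(h² − 1) (so x* > b₀ and x*/√(x*² − b₀²) = h). Define Z(x) := x·cosh t + [ (2/b₀²)(x − √(x² − b₀²)) − x ]·sinh t for x > b₀. Then: (a) x*² − b₀² = 2 sinh² t / (1 + (b₀²/2 − 1)e^{−2t}); (b) Z(x*) = √2·√(1 + (b₀²/2 − 1)e^{−2t}); (c) Z is differentiable at x* with Z′(x*) = 0, where Z′(x) = cosh t + [ (2/b₀²)(1 − x/√(x² − b₀²)) − 1 ]·sinh t. -/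
/-!
Write `s = sinh t`, `E = e^{-t} = cosh t - sinh t` and `w = b₀ / √(h² - 1)`. The choice of `h`
is equivalent to `(h - 1) s = (b₀²/2) E`, and `x* = h w` with `√(x*² - b₀²) = w`. Hence
`Z′(x*) = E - (2/b₀²)(h - 1) s = 0`, and `Z(x*) = w E (h + 1)`. The same relation gives
`1 + (b₀²/2 - 1) e^{-2t} = E s (h + 1)`, from which (a) and, after squaring, (b) follow.
-/

open Real

lemma hasDerivAt_sqrt_sq_sub_sq {b x : ℝ} (hx : b ^ 2 < x ^ 2) :
    HasDerivAt (fun y => √(y ^ 2 - b ^ 2)) (x / √(x ^ 2 - b ^ 2)) x := by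
  have hpos : 0 < √(x ^ 2 - b ^ 2) := sqrt_pos.mpr (sub_pos.mpr hx)
  refine (((hasDerivAt_pow 2 x).sub_const (b ^ 2)).sqrt (sub_pos.mpr hx).ne').congr_deriv ?_
  field_simp
  norm_num

lemma hasDerivAt_characteristic {b c s x : ℝ} (hx : b ^ 2 < x ^ 2) :
    HasDerivAt (fun y => y * c + ((2 / b ^ 2) * (y - √(y ^ 2 - b ^ 2)) - y) * s)
      (c + ((2 / b ^ 2) * (1 - x / √(x ^ 2 - b ^ 2)) - 1) * s) x :=
  (((hasDerivAt_id' x).mul_const c).add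
    (((((hasDerivAt_id' x).sub (hasDerivAt_sqrt_sq_sub_sq hx)).const_mul (2 / b ^ 2)).sub
      (hasDerivAt_id' x)).mul_const s)).congr_deriv (by ring)

lemma exists_sq_sub_sq_eq_sq {b h x : ℝ} (hb : 0 < b) (hh : 1 < h)
    (hx : x = b * h / √(h ^ 2 - 1)) :
    ∃ w, 0 < w ∧ x = h * w ∧ x ^ 2 - b ^ 2 = w ^ 2 ∧ w ^ 2 * ((h - 1) * (h + 1)) = b ^ 2 := by
  have hpos : 0 < h ^ 2 - 1 := by nlinarith
  have hsq : √(h ^ 2 - 1) ^ 2 = h ^ 2 - 1 := sq_sqrt hpos.le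
  subst hx
  refine ⟨b / √(h ^ 2 - 1), by positivity, by ring, ?_, ?_⟩ <;>
  · simp only [div_pow, mul_pow, hsq]
    field_simp
    ring

section

variable {b t h : ℝ}

lemma sub_one_mul_sinh_eq (ht : t ≠ 0) (hh : h = 1 + (b ^ 2 / 2) * (cosh t / sinh t - 1)) :
    (h - 1) * sinh t = b ^ 2 / 2 * exp (-t) := by
  have hs : sinh t ≠ 0 := sinh_ne_zero.mpr ht
  rw [hh, ← cosh_sub_sinh]
  field_simp
  ring

lemma one_lt_of_sub_one_mul_sinh_eq (hb : b ≠ 0) (ht : 0 < t)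
    (hrel : (h - 1) * sinh t = b ^ 2 / 2 * exp (-t)) : 1 < h := by
  have : 0 < (h - 1) * sinh t := by rw [hrel]; positivity
  linarith [(mul_pos_iff_of_pos_right (sinh_pos_iff.mpr ht)).mp this]

lemma one_add_mul_exp_neg_two_mul_eq (hrel : (h - 1) * sinh t = b ^ 2 / 2 * exp (-t)) :
    1 + (b ^ 2 / 2 - 1) * exp (-2 * t) = exp (-t) * sinh t * (h + 1) := by
  have hE2 : exp (-2 * t) = exp (-t) ^ 2 := by rw [← exp_nat_mul]; ring_nf
  have hEe : exp (-t) * exp t = 1 := by rw [← exp_add]; simp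
  have h2s : 2 * sinh t = exp t - exp (-t) := by rw [sinh_eq]; ring
  rw [hE2]
  linear_combination -exp (-t) * hrel - exp (-t) * h2s - hEe

end

/-- in the Hermite case with rescaled semicircle initial data supported on
`[-b₀, b₀]`, with `h = 1 + (b₀²/2)(coth t - 1)` and `x* = b₀ h / √(h² - 1)`, the
characteristic map `Z x = x cosh t + ((2/b₀²)(x - √(x² - b₀²)) - x) sinh t` satisfies:
`h > 1`, `x* > b₀`, `x*/√(x*² - b₀²) = h`,
(a) `x*² - b₀² = 2 sinh² t / (1 + (b₀²/2 - 1) e^{-2t})`,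
(b) `Z x* = √2 √(1 + (b₀²/2 - 1) e^{-2t})`,
(c) `Z` is differentiable at `x*` with the stated derivative, which vanishes. -/
theorem stmt_16 (b₀ t : ℝ) (hb₀ : 0 < b₀) (ht : 0 < t)
    (h xstar : ℝ)
    (hh : h = 1 + (b₀ ^ 2 / 2) * (Real.cosh t / Real.sinh t - 1))
    (hx : xstar = b₀ * h / Real.sqrt (h ^ 2 - 1))
    (Z : ℝ → ℝ)
    (hZ : ∀ x : ℝ, Z x = x * Real.cosh t
      + ((2 / b₀ ^ 2) * (x - Real.sqrt (x ^ 2 - b₀ ^ 2)) - x) * Real.sinh t) :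
    1 < h ∧
    b₀ < xstar ∧
    xstar / Real.sqrt (xstar ^ 2 - b₀ ^ 2) = h ∧
    xstar ^ 2 - b₀ ^ 2
      = 2 * Real.sinh t ^ 2 / (1 + (b₀ ^ 2 / 2 - 1) * Real.exp (-2 * t)) ∧
    Z xstar = Real.sqrt 2 * Real.sqrt (1 + (b₀ ^ 2 / 2 - 1) * Real.exp (-2 * t)) ∧
    HasDerivAt Z
      (Real.cosh t
        + ((2 / b₀ ^ 2) * (1 - xstar / Real.sqrt (xstar ^ 2 - b₀ ^ 2)) - 1)
          * Real.sinh t) xstar ∧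
    Real.cosh t
        + ((2 / b₀ ^ 2) * (1 - xstar / Real.sqrt (xstar ^ 2 - b₀ ^ 2)) - 1)
          * Real.sinh t = 0 := by
  have hrel := sub_one_mul_sinh_eq ht.ne' hh
  have hrel' : 2 / b₀ ^ 2 * (h - 1) * sinh t = exp (-t) := by
    rw [mul_assoc, hrel]; field_simp
  have hh1 := one_lt_of_sub_one_mul_sinh_eq hb₀.ne' ht hrel
  have hD := one_add_mul_exp_neg_two_mul_eq hrel
  obtain ⟨w, hw_pos, hxw, hgap, hwb⟩ := exists_sq_sub_sq_eq_sq hb₀ hh1 hx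
  have hw : √(xstar ^ 2 - b₀ ^ 2) = w := by rw [hgap, sqrt_sq hw_pos.le]
  have hw_sq : w ^ 2 * (h + 1) * exp (-t) = 2 * sinh t := by
    apply mul_left_cancel₀ (sub_pos.mpr hh1).ne'
    linear_combination exp (-t) * hwb - 2 * hrel
  have hdiv : xstar / √(xstar ^ 2 - b₀ ^ 2) = h := by
    rw [hw, hxw, mul_div_cancel_right₀ h hw_pos.ne']
  have hZx : Z xstar = w * exp (-t) * (h + 1) := by
    rw [hZ, hw, hxw]
    linear_combination w * hrel' + w * h * cosh_sub_sinh t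
  refine ⟨hh1, ?_, hdiv, ?_, ?_, ?_, ?_⟩
  · exact lt_of_pow_lt_pow_left₀ 2 (by rw [hxw]; positivity) (by nlinarith)
  · rw [hgap, hD, eq_div_iff (by positivity [sinh_pos_iff.mpr ht])]
    linear_combination sinh t * hw_sq
  · have hsq : (w * exp (-t) * (h + 1)) ^ 2 = 2 * (1 + (b₀ ^ 2 / 2 - 1) * exp (-2 * t)) := by
      rw [hD]; linear_combination exp (-t) * (h + 1) * hw_sq
    rw [hZx, ← sqrt_mul zero_le_two, ← hsq, sqrt_sq (by positivity)]
  · rw [show Z = _ from funext hZ]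
    exact hasDerivAt_characteristic (by nlinarith)
  · rw [hdiv]
    linear_combination cosh_sub_sinh t - hrel'
end

section
/- Let x ∈ (−√2, √2). Then the principal value integral p.v.∫_{−√2}^{√2} √(2 − y²)/(x − y) dy exists, i.e. the limit lim_{ε→0⁺} ∫_{{y ∈ (−√2,√2) : |y − x| > ε}} √(2 − y²)/(x − y) dy exists, and it equals π·x. -/
/-!
For `x² < c`, an explicit primitive of `y ↦ √(c - y²) / (x - y)` away from `y = x` is
`F y = x arcsin (y / √c) - √(c - y²) + √(c - x²) log (c - x y + √(c - x²) √(c - y²))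
  - √(c - x²) log |x - y|`.
Only the last term is singular at `y = x`, and it takes the same value at `x - ε` and `x + ε`.
Hence the truncated integral equals `H (x - ε) - H (x + ε) + F √c - F (-√c)`, where `H` is `F`
without that term and is continuous at `x`; it tends to `F √c - F (-√c) = π x` as `ε → 0⁺`.
-/

open Filter Real Set MeasureTheory Topology

noncomputable def semicirclePrimitiveReg (c x y : ℝ) : ℝ :=
  x * arcsin (y / √c) - √(c - y ^ 2)
    + √(c - x ^ 2) * log (c - x * y + √(c - x ^ 2) * √(c - y ^ 2))

-- `Real.log` is even, so the last term is `√(c - x²) log |x - y|` on both sides of `y = x`.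
noncomputable def semicirclePrimitive (c x y : ℝ) : ℝ :=
  semicirclePrimitiveReg c x y - √(c - x ^ 2) * log (x - y)

section

variable {c x y : ℝ}

lemma sub_mul_add_sqrt_mul_sqrt_pos (hx : x ^ 2 < c) (hy : y ^ 2 ≤ c) :
    0 < c - x * y + √(c - x ^ 2) * √(c - y ^ 2) := by
  nlinarith [mul_nonneg (sqrt_nonneg (c - x ^ 2)) (sqrt_nonneg (c - y ^ 2)), sq_nonneg (x - y)]

lemma hasDerivAt_arcsin_div_sqrt (hy : y ^ 2 < c) :
    HasDerivAt (fun t => arcsin (t / √c)) (1 / √(c - y ^ 2)) y := by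
  have hc : 0 < c := (sq_nonneg y).trans_lt hy
  have hlt : (y / √c) ^ 2 < 1 := by
    rwa [div_pow, sq_sqrt hc.le, div_lt_one hc]
  have hne : y / √c ≠ -1 ∧ y / √c ≠ 1 := by
    constructor <;> rintro h <;> simp [h] at hlt
  refine ((hasDerivAt_arcsin hne.1 hne.2).comp y ((hasDerivAt_id y).div_const √c)).congr_deriv ?_
  rw [one_div_mul_one_div, ← sqrt_mul (sub_nonneg.2 hlt.le), sub_mul, div_pow, sq_sqrt hc.le,
    div_mul_cancel₀ _ hc.ne', one_mul]

lemma hasDerivAt_sqrt_sub_sq (hy : y ^ 2 < c) :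
    HasDerivAt (fun t => √(c - t ^ 2)) (-(y / √(c - y ^ 2))) y := by
  convert ((hasDerivAt_pow 2 y).const_sub c).sqrt (sub_pos.2 hy).ne' using 1
  field_simp
  ring

-- The derivative of `semicirclePrimitive c x` at `y`, with `r = √(c - y²)`, `s = √(c - x²)` and
-- `N` the argument of the logarithm.
lemma semicirclePrimitive_deriv_identity {r s N : ℝ} (hr : r ^ 2 = c - y ^ 2)
    (hs : s ^ 2 = c - x ^ 2) (hr0 : r ≠ 0) (hN : N = c - x * y + s * r) (hN0 : N ≠ 0)
    (hxy : x - y ≠ 0) :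
    x * (1 / r) - -(y / r) + s * ((-x + s * -(y / r)) / N) - s * (-1 / (x - y)) = r / (x - y) := by
  have hNmul : N * (r - s) = (x * r + s * y) * (x - y) := by
    rw [hN]; linear_combination s * hr - r * hs
  have hlogN : (-x + s * -(y / r)) / N = -(r - s) / (r * (x - y)) := by
    rw [div_eq_div_iff hN0 (mul_ne_zero hr0 hxy)]
    field_simp
    linear_combination hNmul
  rw [hlogN]
  field_simp
  linear_combination hs - hr

lemma hasDerivAt_semicirclePrimitive (hx : x ^ 2 < c) (hy : y ^ 2 < c) (hxy : x ≠ y) :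
    HasDerivAt (semicirclePrimitive c x) (√(c - y ^ 2) / (x - y)) y := by
  have hN := sub_mul_add_sqrt_mul_sqrt_pos hx hy.le
  have hlogN : HasDerivAt (fun t => log (c - x * t + √(c - x ^ 2) * √(c - t ^ 2)))
      ((-x + √(c - x ^ 2) * -(y / √(c - y ^ 2)))
        / (c - x * y + √(c - x ^ 2) * √(c - y ^ 2))) y := by
    have := ((hasDerivAt_id y).const_mul x).const_sub c
    simp only [id, mul_one] at this
    exact (this.add ((hasDerivAt_sqrt_sub_sq hy).const_mul _)).log hN.ne'
  have hlog : HasDerivAt (fun t => log (x - t)) (-1 / (x - y)) y :=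
    ((hasDerivAt_id y).const_sub x).log (sub_ne_zero.2 hxy)
  refine ((((hasDerivAt_arcsin_div_sqrt hy).const_mul x).sub (hasDerivAt_sqrt_sub_sq hy)).add
    (hlogN.const_mul _)).sub (hlog.const_mul _) |>.congr_deriv ?_
  exact semicirclePrimitive_deriv_identity (sq_sqrt (sub_pos.2 hy).le)
    (sq_sqrt (sub_pos.2 hx).le) (sqrt_pos.2 (sub_pos.2 hy)).ne' rfl hN.ne' (sub_ne_zero.2 hxy)

lemma continuousAt_semicirclePrimitiveReg (hx : x ^ 2 < c) (hy : y ^ 2 ≤ c) :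
    ContinuousAt (semicirclePrimitiveReg c x) y := by
  have hN := (sub_mul_add_sqrt_mul_sqrt_pos hx hy).ne'
  unfold semicirclePrimitiveReg
  fun_prop (disch := exact hN)

lemma continuousOn_semicirclePrimitive {a b : ℝ} (hx : x ^ 2 < c) (ha : -√c ≤ a) (hb : b ≤ √c)
    (hxab : x ∉ Icc a b) : ContinuousOn (semicirclePrimitive c x) (Icc a b) := by
  intro y hy
  have hy2 : y ^ 2 ≤ c :=
    (Real.sq_le ((sq_nonneg x).trans hx.le)).2 ⟨ha.trans hy.1, hy.2.trans hb⟩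
  have hxy : x - y ≠ 0 := sub_ne_zero.2 (ne_of_mem_of_not_mem hy hxab).symm
  exact ((continuousAt_semicirclePrimitiveReg hx hy2).sub
    (continuousAt_const.mul ((continuousAt_const.sub continuousAt_id).log hxy))).continuousWithinAt

lemma continuousOn_sqrt_sub_sq_div_sub {s : Set ℝ} (hx : x ∉ s) :
    ContinuousOn (fun y => √(c - y ^ 2) / (x - y)) s :=
  (by fun_prop : Continuous fun y => √(c - y ^ 2)).continuousOn.div (by fun_prop)
    fun _ hy => sub_ne_zero.2 (ne_of_mem_of_not_mem hy hx).symm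

lemma integral_Ioo_sqrt_sub_sq_div_sub {a b : ℝ} (hab : a ≤ b) (hx : x ^ 2 < c) (ha : -√c ≤ a)
    (hb : b ≤ √c) (hxab : x ∉ Icc a b) :
    ∫ y in Ioo a b, √(c - y ^ 2) / (x - y)
      = semicirclePrimitive c x b - semicirclePrimitive c x a := by
  rw [← integral_Ioc_eq_integral_Ioo, ← intervalIntegral.integral_of_le hab]
  refine intervalIntegral.integral_eq_sub_of_hasDeriv_right_of_le hab
    (continuousOn_semicirclePrimitive hx ha hb hxab) (fun y hy => ?_) ?_
  · have hy2 : y ^ 2 < c := Real.sq_lt.2 ⟨ha.trans_lt hy.1, hy.2.trans_le hb⟩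
    have hxy : x ≠ y := fun h => hxab (h ▸ Ioo_subset_Icc_self hy)
    exact (hasDerivAt_semicirclePrimitive hx hy2 hxy).hasDerivWithinAt
  · rw [← uIcc_of_le hab] at hxab
    exact (continuousOn_sqrt_sub_sq_div_sub hxab).intervalIntegrable

lemma semicirclePrimitive_sqrt_sub_neg_sqrt (hx : x ∈ Ioo (-√c) √c) :
    semicirclePrimitive c x √c - semicirclePrimitive c x (-√c) = π * x := by
  obtain ⟨hx1, hx2⟩ := hx
  have hc : 0 < √c := by linarith
  have hcc : √c * √c = c := mul_self_sqrt (sqrt_pos.1 hc).le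
  have hright : c - x * √c = √c * (√c - x) := by linear_combination -hcc
  have hleft : c - x * -√c = √c * (√c + x) := by linear_combination -hcc
  simp only [semicirclePrimitive, semicirclePrimitiveReg, neg_div, div_self hc.ne', arcsin_one,
    arcsin_neg_one, neg_sq, sq_sqrt (sqrt_pos.1 hc).le, sub_self, sqrt_zero, mul_zero, add_zero,
    hright, hleft, log_mul hc.ne' (sub_pos.2 hx2).ne', log_mul hc.ne' (by linarith : √c + x ≠ 0)]
  rw [show x - √c = -(√c - x) by ring, log_neg_eq_log, show x - -√c = √c + x by ring]
  ring

lemma setOf_mem_Ioo_and_lt_abs_sub {a b ε : ℝ} (hx : x ∈ Icc a b) (hε : 0 ≤ ε) :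
    {y | y ∈ Ioo a b ∧ ε < |y - x|} = Ioo a (x - ε) ∪ Ioo (x + ε) b := by
  ext y
  simp only [mem_ofPred_eq, mem_Ioo, mem_union, lt_abs, mem_Icc] at hx ⊢
  constructor
  · rintro ⟨⟨hay, hyb⟩, hright | hleft⟩
    · exact Or.inr ⟨by linarith, hyb⟩
    · exact Or.inl ⟨hay, by linarith⟩
  · rintro (⟨hay, hyx⟩ | ⟨hxy, hyb⟩)
    · exact ⟨⟨hay, by linarith⟩, Or.inr (by linarith)⟩
    · exact ⟨⟨by linarith, hyb⟩, Or.inl (by linarith)⟩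

lemma integral_truncated_sqrt_sub_sq_div_sub (hx : x ∈ Ioo (-√c) √c) {ε : ℝ} (hε : 0 < ε)
    (hεl : ε < x + √c) (hεr : ε < √c - x) :
    ∫ y in {y | y ∈ Ioo (-√c) √c ∧ ε < |y - x|}, √(c - y ^ 2) / (x - y)
      = semicirclePrimitiveReg c x (x - ε) - semicirclePrimitiveReg c x (x + ε) + π * x := by
  have hx2 : x ^ 2 < c := Real.sq_lt.2 hx
  have hxl : x ∉ Icc (-√c) (x - ε) := fun h => by linarith [h.2]
  have hxr : x ∉ Icc (x + ε) √c := fun h => by linarith [h.1]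
  have hdisj : Disjoint (Ioo (-√c) (x - ε)) (Ioo (x + ε) √c) :=
    disjoint_left.2 fun y hl hr => by linarith [hl.2, hr.1]
  rw [setOf_mem_Ioo_and_lt_abs_sub (Ioo_subset_Icc_self hx) hε.le,
    setIntegral_union hdisj measurableSet_Ioo
      ((continuousOn_sqrt_sub_sq_div_sub hxl).integrableOn_compact isCompact_Icc |>.mono_set
        Ioo_subset_Icc_self)
      ((continuousOn_sqrt_sub_sq_div_sub hxr).integrableOn_compact isCompact_Icc |>.mono_set
        Ioo_subset_Icc_self),
    integral_Ioo_sqrt_sub_sq_div_sub (by linarith) hx2 le_rfl (by linarith) hxl,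
    integral_Ioo_sqrt_sub_sq_div_sub (by linarith) hx2 (by linarith) le_rfl hxr,
    ← semicirclePrimitive_sqrt_sub_neg_sqrt hx]
  simp only [semicirclePrimitive, sub_sub_cancel, sub_add_cancel_left, log_neg_eq_log]
  ring

theorem tendsto_integral_truncated_sqrt_sub_sq_div_sub (hx : x ∈ Ioo (-√c) √c) :
    Tendsto (fun ε => ∫ y in {y | y ∈ Ioo (-√c) √c ∧ ε < |y - x|}, √(c - y ^ 2) / (x - y))
      (𝓝[>] 0) (𝓝 (π * x)) := by
  have hx2 : x ^ 2 < c := Real.sq_lt.2 hx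
  have hreg : ContinuousAt (fun ε => semicirclePrimitiveReg c x (x - ε)
      - semicirclePrimitiveReg c x (x + ε) + π * x) 0 := by
    have h := continuousAt_semicirclePrimitiveReg hx2 hx2.le
    exact ((h.comp_of_eq (by fun_prop) (sub_zero x)).sub
      (h.comp_of_eq (by fun_prop) (add_zero x))).add continuousAt_const
  have hlim := hreg.tendsto.mono_left (nhdsWithin_le_nhds (s := Ioi 0))
  simp only [sub_zero, add_zero, sub_self, zero_add] at hlim
  refine hlim.congr' ?_
  filter_upwards [Ioo_mem_nhdsGT (lt_min (sub_pos.2 hx.2) (neg_lt_iff_pos_add.1 hx.1))]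
    with ε ⟨hε, hεmin⟩
  exact (integral_truncated_sqrt_sub_sq_div_sub hx hε (lt_min_iff.1 hεmin).2
    (lt_min_iff.1 hεmin).1).symm

end

/-- the principal value integral
`p.v. ∫_{-√2}^{√2} √(2 - y²)/(x - y) dy` exists for `x ∈ (-√2, √2)` and equals `π x`
(the cut equation for the semicircle law). -/
theorem stmt_18 (x : ℝ) (hx : x ∈ Set.Ioo (-Real.sqrt 2) (Real.sqrt 2)) :
    Tendsto (fun ε : ℝ =>
        ∫ y in {y : ℝ | y ∈ Set.Ioo (-Real.sqrt 2) (Real.sqrt 2) ∧ ε < |y - x|},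
          Real.sqrt (2 - y ^ 2) / (x - y))
      (nhdsWithin 0 (Set.Ioi 0)) (nhds (Real.pi * x)) :=
  tendsto_integral_truncated_sqrt_sub_sq_div_sub hx
end
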